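/- For every L > 0 and every n ∈ ℕ, ∫_{C_{n+1}(L)} e^{-r} dr = 𝒜_0(L/3^n) · ∫_{C_n(L)} e^{-r} dr, where 𝒜_0(3ℓ) = (1 + e^{-2ℓ})(1 − e^{-ℓ})/(1 − e^{-3ℓ}) for ℓ > 0; equivalently, ∫_{C_{n+1}(L)} e^{-r} dr = (1 + e^{-2L/3^{n+1}})(1 − e^{-L/3^{n+1}})/(1 − e^{-L/3^{n}}) · ∫_{C_n(L)} e^{-r} dr. -/
import Mathlib


open Real MeasureTheory

/-- The `n`-iterate mid-third Cantor set based in `[0, L]`: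
`C₀(L) = [0,L]` and `C_{n+1}(L) = (1/3)·C_n(L) ∪ (2L/3 + (1/3)·C_n(L))`. -/
def cantorIterate : ℕ → ℝ → Set ℝ
  | 0, L => Set.Icc 0 L
  | n + 1, L =>
      (fun x => x / 3) '' cantorIterate n L ∪
        (fun x => 2 * L / 3 + x / 3) '' cantorIterate n L

lemma cantorIterate_isCompact (n : ℕ) (L : ℝ) : IsCompact (cantorIterate n L) := by
  induction n generalizing L with
  | zero => exact isCompact_Icc
  | succ n ih =>
    exact ((ih L).image (by continuity)).union ((ih L).image (by continuity))

lemma cantorIterate_subset (n : ℕ) (L : ℝ) (hL : 0 ≤ L) :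
    cantorIterate n L ⊆ Set.Icc 0 L := by
  induction n generalizing L with
  | zero => exact subset_rfl
  | succ n ih =>
    rintro x (⟨y, hy, rfl⟩ | ⟨y, hy, rfl⟩)
    · obtain ⟨h0, h1⟩ := ih L hL hy
      constructor <;> [positivity; nlinarith]
    · obtain ⟨h0, h1⟩ := ih L hL hy
      constructor <;> nlinarith

lemma cantorIterate_scale (n : ℕ) (L : ℝ) :
    (fun x => x / 3) '' cantorIterate n L = cantorIterate n (L / 3) := by
  induction n generalizing L with
  | zero =>
    ext x
    simp only [cantorIterate, Set.mem_image, Set.mem_Icc]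
    constructor
    · rintro ⟨y, ⟨h0, h1⟩, rfl⟩; constructor <;> linarith
    · rintro ⟨h0, h1⟩; exact ⟨3 * x, ⟨by linarith, by linarith⟩, by ring⟩
  | succ n ih =>
    show (fun x => x / 3) '' _ = _
    simp only [cantorIterate, Set.image_union]
    congr 1
    · rw [← ih L, Set.image_image]
    · rw [← ih L, Set.image_image, Set.image_image]
      apply Set.image_congr'; intro x; ring

/-- Change of variables for an affine contraction `x ↦ b + x/3`. -/
lemma integral_affine_image (n : ℕ) (L b : ℝ) :
    ∫ r in (fun x => b + x / 3) '' cantorIterate n L, Real.exp (-r) =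
      ∫ x in cantorIterate n L, (1 / 3) * Real.exp (-(b + x / 3)) := by
  have hmeas : MeasurableSet (cantorIterate n L) :=
    (cantorIterate_isCompact n L).measurableSet
  have hderiv : ∀ x ∈ cantorIterate n L,
      HasDerivWithinAt (fun x : ℝ => b + x / 3) ((fun _ : ℝ => (1:ℝ)/3) x)
        (cantorIterate n L) x := by
    intro x _
    simpa using (((hasDerivAt_id x).div_const 3).const_add b).hasDerivWithinAt
  have hinj : Set.InjOn (fun x : ℝ => b + x / 3) (cantorIterate n L) := by
    intro a _ c _ h
    simp only at h; linarith
  rw [integral_image_eq_integral_abs_deriv_smul hmeas hderiv hinj]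
  apply setIntegral_congr_fun hmeas
  intro x _
  rw [abs_of_pos (by norm_num : (0:ℝ) < 1/3)]
  simp [smul_eq_mul]

lemma cantorIterate_integral (n : ℕ) (L : ℝ) (hL : 0 < L) :
    ∫ r in cantorIterate n L, Real.exp (-r) =
      (∏ k ∈ Finset.range n, (1 + Real.exp (-(2 * L / 3 ^ (k + 1))))) *
        (1 - Real.exp (-(L / 3 ^ n))) := by
  induction n generalizing L with
  | zero =>
    simp only [cantorIterate, Finset.range_zero, Finset.prod_empty, one_mul, pow_zero, div_one]
    rw [MeasureTheory.integral_Icc_eq_integral_Ioc,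
      ← intervalIntegral.integral_of_le hL.le,
      intervalIntegral.integral_comp_neg (f := Real.exp)]
    simp
  | succ n ih =>
    have hmeas : MeasurableSet ((fun x : ℝ => 2 * L / 3 + x / 3) '' cantorIterate n L) :=
      ((cantorIterate_isCompact n L).image (by continuity)).measurableSet
    have hint1 : IntegrableOn (fun r => Real.exp (-r))
        ((fun x : ℝ => x / 3) '' cantorIterate n L) :=
      ContinuousOn.integrableOn_compact
        ((cantorIterate_isCompact n L).image (by continuity))
        (Continuous.continuousOn (by continuity))
    have hint2 : IntegrableOn (fun r => Real.exp (-r))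
        ((fun x : ℝ => 2 * L / 3 + x / 3) '' cantorIterate n L) :=
      ContinuousOn.integrableOn_compact
        ((cantorIterate_isCompact n L).image (by continuity))
        (Continuous.continuousOn (by continuity))
    have hdisj : Disjoint ((fun x : ℝ => x / 3) '' cantorIterate n L)
        ((fun x : ℝ => 2 * L / 3 + x / 3) '' cantorIterate n L) := by
      rw [Set.disjoint_left]
      rintro a ⟨y, hy, rfl⟩ ⟨z, hz, h⟩
      obtain ⟨hy0, hy1⟩ := cantorIterate_subset n L hL.le hy
      obtain ⟨hz0, hz1⟩ := cantorIterate_subset n L hL.le hz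
      simp only at h
      nlinarith
    have key : ∫ r in cantorIterate (n + 1) L, Real.exp (-r) =
        (1 + Real.exp (-(2 * L / 3))) * ∫ r in cantorIterate n (L / 3), Real.exp (-r) := by
      show (∫ r in (fun x : ℝ => x / 3) '' cantorIterate n L ∪
          (fun x : ℝ => 2 * L / 3 + x / 3) '' cantorIterate n L, Real.exp (-r)) = _
      rw [setIntegral_union hdisj hmeas hint1 hint2]
      have e1 : ∫ r in (fun x : ℝ => x / 3) '' cantorIterate n L, Real.exp (-r) =
          ∫ r in cantorIterate n (L / 3), Real.exp (-r) := by
        rw [← cantorIterate_scale]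
      have e2 : ∫ r in (fun x : ℝ => 2 * L / 3 + x / 3) '' cantorIterate n L, Real.exp (-r) =
          Real.exp (-(2 * L / 3)) * ∫ r in cantorIterate n (L / 3), Real.exp (-r) := by
        have h0 : (fun x : ℝ => x / 3) = fun x : ℝ => 0 + x / 3 := by funext x; ring
        rw [integral_affine_image, ← cantorIterate_scale, h0, integral_affine_image n L 0,
          ← integral_const_mul]
        apply setIntegral_congr_fun (cantorIterate_isCompact n L).measurableSet
        intro x _
        show 1 / 3 * Real.exp (-(2 * L / 3 + x / 3)) =
          Real.exp (-(2 * L / 3)) * (1 / 3 * Real.exp (-(0 + x / 3)))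
        rw [show -(2 * L / 3 + x / 3) = -(2 * L / 3) + -(0 + x / 3) by ring, Real.exp_add]
        ring
      rw [e1, e2]; ring
    rw [key, ih (L / 3) (by linarith)]
    rw [Finset.prod_range_succ']
    have h3 : ∀ k : ℕ, 2 * (L / 3) / 3 ^ (k + 1) = 2 * L / 3 ^ (k + 1 + 1) := by
      intro k; rw [pow_succ]; ring
    have h4 : L / 3 / 3 ^ n = L / 3 ^ (n + 1) := by rw [pow_succ]; ring
    simp only [h3, h4, pow_one]
    rw [show (2 * L / 3 ^ (0 + 1) : ℝ) = 2 * L / 3 by norm_num]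
    ring

/-- Recursive relation for the first eigenvalue: passing from the `n`-iterate to
the `(n+1)`-iterate multiplies `∫ e^{-r} dr` by the relative area
`𝒜₀(L/3ⁿ) = (1 + e^{-2L/3^{n+1}})(1 - e^{-L/3^{n+1}})/(1 - e^{-L/3ⁿ})`. -/
theorem cantor_first_eigenvalue_recursion (L : ℝ) (hL : 0 < L) (n : ℕ) :
    ∫ r in cantorIterate (n + 1) L, Real.exp (-r) =
      (1 + Real.exp (-(2 * L / 3 ^ (n + 1)))) * (1 - Real.exp (-(L / 3 ^ (n + 1)))) /
          (1 - Real.exp (-(L / 3 ^ n))) *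
        ∫ r in cantorIterate n L, Real.exp (-r) := by
  rw [cantorIterate_integral (n + 1) L hL, cantorIterate_integral n L hL,
    Finset.prod_range_succ]
  have hpos : (0:ℝ) < L / 3 ^ n := by positivity
  have hne : 1 - Real.exp (-(L / 3 ^ n)) ≠ 0 := by
    have : Real.exp (-(L / 3 ^ n)) < 1 := by
      rw [Real.exp_lt_one_iff]; linarith
    linarith
  have key : ∀ a b c d : ℝ, d ≠ 0 → a * b * c = b * c / d * (a * d) := by
    intro a b c d hd; field_simp
  exact key _ _ _ _ hne
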